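/- Small-coil (dipole) expansion: Let φ: [0,L] → ℝ³ be a C² curve with ∫₀^L φ'(s) ds = 0, y its center of mass, and M = 4π ∫₀^L φ'(s) ⊗ (φ(s) − y) ds. Then the first-order Taylor expansion of the Biot–Savart field gives ∫₀^L φ'(s) × ∇F(w)(φ(s) − y) ds = ∇ × (Mᵀ ∇γ(w−y)) up to the stated matrix transposition convention, where F(w,v) = (w−v)/|w−v|³ and ∇F is its Jacobian in v at v = y. -/

import Mathlib

open Real

noncomputable def fundSol : EuclideanSpace ℝ (Fin 3) → ℝ := fun x => 1 / (4 * π * ‖x‖)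

/-- The cross product on `ℝ³`. -/
noncomputable def cross3 (a b : EuclideanSpace ℝ (Fin 3)) : EuclideanSpace ℝ (Fin 3) :=
  (WithLp.equiv 2 (Fin 3 → ℝ)).symm
    ![a 1 * b 2 - a 2 * b 1, a 2 * b 0 - a 0 * b 2, a 0 * b 1 - a 1 * b 0]

/-- The curl of a vector field on `ℝ³`. -/
noncomputable def curl3 (F : EuclideanSpace ℝ (Fin 3) → EuclideanSpace ℝ (Fin 3))
    (w : EuclideanSpace ℝ (Fin 3)) : EuclideanSpace ℝ (Fin 3) :=
  (WithLp.equiv 2 (Fin 3 → ℝ)).symm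
    ![fderiv ℝ (fun x => F x 2) w (EuclideanSpace.single 1 1)
        - fderiv ℝ (fun x => F x 1) w (EuclideanSpace.single 2 1),
      fderiv ℝ (fun x => F x 0) w (EuclideanSpace.single 2 1)
        - fderiv ℝ (fun x => F x 2) w (EuclideanSpace.single 0 1),
      fderiv ℝ (fun x => F x 1) w (EuclideanSpace.single 0 1)
        - fderiv ℝ (fun x => F x 0) w (EuclideanSpace.single 1 1)]

/-!
Both sides are linear in the moments `m a b = ∫ φ'_a (φ - y)_b`. Let `J` be the Jacobian of the
Coulomb field `z ↦ z / ‖z‖³` at `w - y`. The derivative of the Biot–Savart kernel in `v` is `-J`,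
and since `∇γ(z) = -(4π)⁻¹ z / ‖z‖³`, the Jacobian of `∇γ(· - y)` at `w` is `-(4π)⁻¹ J`. Writing
`(p, q) = (i + 1, i + 2)`, the `i`-th component of the left side is
`-∑ⱼ (m p j (J eⱼ)_q - m q j (J eⱼ)_p)` and that of the curl is `∑ⱼ (m j p (J e_q)ⱼ - m j q (J e_p)ⱼ)`.
These agree term by term because `J` is symmetric and `m` is antisymmetric: `m a b + m b a` is the
integral of `((φ - y)_a (φ - y)_b)'`, which vanishes on a closed curve.
-/

section Coulomb

variable {E : Type*} [NormedAddCommGroup E] [InnerProductSpace ℝ E]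

theorem hasFDerivAt_norm_of_ne_zero {x : E} (hx : x ≠ 0) :
    HasFDerivAt (‖·‖) (‖x‖⁻¹ • innerSL ℝ x) x := by
  have hsq : (fun z : E => ‖z‖ ^ 2) x ≠ 0 := by simpa using hx
  convert (hasStrictFDerivAt_norm_sq x).hasFDerivAt.sqrt hsq using 1
  · simp [Real.sqrt_sq (norm_nonneg _)]
  · ext u
    simp [Real.sqrt_sq (norm_nonneg _)]
    field_simp

theorem hasFDerivAt_inv_norm_pow_three {x : E} (hx : x ≠ 0) :
    HasFDerivAt (fun z : E => (‖z‖ ^ 3)⁻¹) (-(3 * (‖x‖ ^ 5)⁻¹) • innerSL ℝ x) x := by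
  have hn : ‖x‖ ≠ 0 := norm_ne_zero_iff.mpr hx
  have h := ((hasDerivAt_pow 3 ‖x‖).inv (pow_ne_zero 3 hn)).comp_hasFDerivAt x
    (hasFDerivAt_norm_of_ne_zero hx)
  refine h.congr_fderiv ?_
  rw [smul_smul]
  congr 1
  field_simp
  ring

noncomputable def coulombJacobian (r : E) : E →L[ℝ] E :=
  (‖r‖ ^ 3)⁻¹ • ContinuousLinearMap.id ℝ E - (3 * (‖r‖ ^ 5)⁻¹) • (innerSL ℝ r).smulRight r

theorem coulombJacobian_apply (r u : E) :
    coulombJacobian r u = (‖r‖ ^ 3)⁻¹ • u - (3 * (‖r‖ ^ 5)⁻¹ * inner ℝ r u) • r := by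
  simp [coulombJacobian, mul_smul]

theorem hasFDerivAt_coulomb {r : E} (hr : r ≠ 0) :
    HasFDerivAt (fun z : E => (‖z‖ ^ 3)⁻¹ • z) (coulombJacobian r) r := by
  refine ((hasFDerivAt_inv_norm_pow_three hr).smul (hasFDerivAt_id r)).congr_fderiv ?_
  ext u
  simp [coulombJacobian_apply, sub_eq_add_neg, mul_smul]

theorem fderiv_coulomb_const_sub {w y : E} (hwy : w ≠ y) :
    fderiv ℝ (fun v : E => (‖w - v‖ ^ 3)⁻¹ • (w - v)) y = -coulombJacobian (w - y) := by
  have h := (hasFDerivAt_coulomb (sub_ne_zero.mpr hwy)).comp y ((hasFDerivAt_id y).const_sub w)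
  rw [HasFDerivAt.fderiv (f := fun v : E => (‖w - v‖ ^ 3)⁻¹ • (w - v)) h]
  ext u
  simp

end Coulomb

theorem coulombJacobian_single_apply_comm {ι : Type*} [Fintype ι] [DecidableEq ι]
    (r : EuclideanSpace ℝ ι) (j k : ι) :
    coulombJacobian r (EuclideanSpace.single k 1) j
      = coulombJacobian r (EuclideanSpace.single j 1) k := by
  simp only [coulombJacobian_apply, PiLp.sub_apply, PiLp.smul_apply, smul_eq_mul,
    EuclideanSpace.inner_single_right, PiLp.single_apply]
  simp [eq_comm]
  ring

theorem intervalIntegral_mul_clm_apply_eq_sum {ι κ : Type*} [Fintype ι] [DecidableEq ι]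
    {a b : ℝ} {c : ℝ → ℝ} {g : ℝ → EuclideanSpace ℝ ι} (hc : Continuous c) (hg : Continuous g)
    (T : EuclideanSpace ℝ ι →L[ℝ] EuclideanSpace ℝ κ) (q : κ) :
    ∫ s in a..b, c s * T (g s) q
      = ∑ j, (∫ s in a..b, c s * g s j) * T (EuclideanSpace.single j 1) q := by
  have hexp : ∀ u : EuclideanSpace ℝ ι, T u q = ∑ j, u j * T (EuclideanSpace.single j 1) q := by
    intro u
    have h := congrArg (fun v => T v q) ((EuclideanSpace.basisFun ι ℝ).sum_repr u)
    simp only [map_sum, map_smul, EuclideanSpace.basisFun_repr,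
      EuclideanSpace.basisFun_apply] at h
    rw [← h]
    simp
  have hexp' : ∀ s, c s * T (g s) q = ∑ j, c s * g s j * T (EuclideanSpace.single j 1) q :=
    fun s => by rw [hexp, Finset.mul_sum]; simp only [mul_assoc]
  simp_rw [hexp']
  rw [intervalIntegral.integral_finsetSum fun j _ =>
    Continuous.intervalIntegrable (by fun_prop) _ _]
  simp [intervalIntegral.integral_mul_const]

theorem intervalIntegral_deriv_mul_antisymm {E : Type*} [NormedAddCommGroup E]
    [NormedSpace ℝ E] [CompleteSpace E] {a b : ℝ} {φ : ℝ → E} (hφ : ContDiff ℝ 1 φ)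
    (hclosed : ∫ s in a..b, deriv φ s = 0) (ℓ₁ ℓ₂ : E →L[ℝ] ℝ) (y : E) :
    ∫ s in a..b, ℓ₂ (deriv φ s) * ℓ₁ (φ s - y)
      = -∫ s in a..b, ℓ₁ (deriv φ s) * ℓ₂ (φ s - y) := by
  have hderiv : ∀ s, HasDerivAt φ (deriv φ s) s := fun s =>
    (hφ.differentiable one_ne_zero s).hasDerivAt
  have hφ' : Continuous (deriv φ) := hφ.continuous_deriv le_rfl
  have hend : φ b = φ a := by
    have h := intervalIntegral.integral_eq_sub_of_hasDerivAt (fun s _ => hderiv s)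
      (hφ'.intervalIntegrable a b)
    rw [hclosed] at h
    exact sub_eq_zero.mp h.symm
  have hprod : ∀ s, HasDerivAt (fun t => ℓ₁ (φ t - y) * ℓ₂ (φ t - y))
      (ℓ₁ (deriv φ s) * ℓ₂ (φ s - y) + ℓ₂ (deriv φ s) * ℓ₁ (φ s - y)) s := by
    intro s
    have h₁ := ℓ₁.hasFDerivAt.comp_hasDerivAt s ((hderiv s).sub_const y)
    have h₂ := ℓ₂.hasFDerivAt.comp_hasDerivAt s ((hderiv s).sub_const y)
    exact (h₁.mul h₂).congr_deriv (by simp only [Function.comp_apply]; ring)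
  have hftc := intervalIntegral.integral_eq_sub_of_hasDerivAt (fun s _ => hprod s)
    (Continuous.intervalIntegrable (by fun_prop) a b)
  rw [hend, sub_self, intervalIntegral.integral_add
    (Continuous.intervalIntegrable (by fun_prop) _ _)
    (Continuous.intervalIntegrable (by fun_prop) _ _)] at hftc
  linarith

local notation "E3" => EuclideanSpace ℝ (Fin 3)

theorem cross3_apply (a b : E3) (i : Fin 3) :
    cross3 a b i = a (i + 1) * b (i + 2) - a (i + 2) * b (i + 1) := by
  fin_cases i <;> rfl

theorem curl3_apply (F : E3 → E3) (w : E3) (i : Fin 3) :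
    curl3 F w i = fderiv ℝ (fun x => F x (i + 2)) w (EuclideanSpace.single (i + 1) 1)
      - fderiv ℝ (fun x => F x (i + 1)) w (EuclideanSpace.single (i + 2) 1) := by
  fin_cases i <;> rfl

theorem Continuous.cross3 {f g : ℝ → E3} (hf : Continuous f) (hg : Continuous g) :
    Continuous fun s => cross3 (f s) (g s) := by
  refine (PiLp.continuous_toLp 2 _).comp (continuous_pi fun i => ?_)
  fin_cases i <;> simp <;> fun_prop

theorem intervalIntegral_cross3_apply {a b : ℝ} {f g : ℝ → E3} (hf : Continuous f)
    (hg : Continuous g) (T : E3 →L[ℝ] E3) (i : Fin 3) :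
    (∫ s in a..b, cross3 (f s) (T (g s))) i
      = ∑ j, ((∫ s in a..b, f s (i + 1) * g s j) * T (EuclideanSpace.single j 1) (i + 2)
          - (∫ s in a..b, f s (i + 2) * g s j) * T (EuclideanSpace.single j 1) (i + 1)) := by
  have hint : IntervalIntegrable (fun s => cross3 (f s) (T (g s))) MeasureTheory.volume a b :=
    (hf.cross3 (T.continuous.comp hg)).intervalIntegrable a b
  have hproj := (EuclideanSpace.proj i).intervalIntegral_comp_comm hint
  simp only [PiLp.proj_apply] at hproj
  rw [← hproj]
  simp only [cross3_apply]
  rw [intervalIntegral.integral_sub (Continuous.intervalIntegrable (by fun_prop) _ _)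
      (Continuous.intervalIntegrable (by fun_prop) _ _),
    intervalIntegral_mul_clm_apply_eq_sum (by fun_prop) hg,
    intervalIntegral_mul_clm_apply_eq_sum (by fun_prop) hg, Finset.sum_sub_distrib]

theorem curl3_sum_mul_apply {G : E3 → E3} {G' : E3 →L[ℝ] E3} {w : E3}
    (hG : HasFDerivAt G G' w) (M : Fin 3 → Fin 3 → ℝ) (i : Fin 3) :
    curl3 (fun x => (WithLp.equiv 2 (Fin 3 → ℝ)).symm (fun l => ∑ j, M j l * G x j)) w i
      = ∑ j, (M j (i + 2) * G' (EuclideanSpace.single (i + 1) 1) j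
          - M j (i + 1) * G' (EuclideanSpace.single (i + 2) 1) j) := by
  have hcomp : ∀ l, HasFDerivAt (fun x => ∑ j, M j l * G x j)
      (∑ j, M j l • (EuclideanSpace.proj j).comp G') w := fun l =>
    HasFDerivAt.fun_sum fun j _ =>
      ((EuclideanSpace.proj j).hasFDerivAt.comp w hG).const_mul (M j l)
  rw [curl3_apply]
  simp only [WithLp.equiv_symm_apply, PiLp.toLp_apply]
  rw [(hcomp _).fderiv, (hcomp _).fderiv]
  simp [Finset.sum_sub_distrib]

theorem gradient_fundSol {z : E3} (hz : z ≠ 0) :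
    gradient fundSol z = (-(4 * π)⁻¹ * (‖z‖ ^ 3)⁻¹ : ℝ) • z := by
  have hn : ‖z‖ ≠ 0 := norm_ne_zero_iff.mpr hz
  have hfun : fundSol = fun x => (4 * π)⁻¹ * ‖x‖⁻¹ := by
    funext x
    rw [fundSol, one_div, mul_inv]
  refine HasGradientAt.gradient ((hasGradientAt_iff_hasFDerivAt (𝕜 := ℝ)).mpr ?_)
  rw [hfun]
  refine (((hasDerivAt_inv hn).comp_hasFDerivAt z
    (hasFDerivAt_norm_of_ne_zero hz)).const_mul _).congr_fderiv ?_
  ext u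
  simp
  field_simp

theorem hasFDerivAt_gradient_fundSol_sub {w y : E3} (hwy : w ≠ y) :
    HasFDerivAt (fun x => gradient fundSol (x - y))
      ((-(4 * π)⁻¹ : ℝ) • coulombJacobian (w - y)) w := by
  have hK := (hasFDerivAt_coulomb (sub_ne_zero.mpr hwy)).comp w ((hasFDerivAt_id w).sub_const y)
  refine ((hK.const_smul (-(4 * π)⁻¹ : ℝ)).congr_of_eventuallyEq ?_).congr_fderiv ?_
  · filter_upwards [isOpen_ne.mem_nhds hwy] with x hx
    simp [gradient_fundSol (sub_ne_zero.mpr hx), mul_smul]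
  · ext u
    simp

theorem stmt17_general (Lc : ℝ) (φ : ℝ → EuclideanSpace ℝ (Fin 3))
    (hφ : ContDiff ℝ 2 φ)
    (hclosed : ∫ s in (0 : ℝ)..Lc, deriv φ s = 0)
    (y : EuclideanSpace ℝ (Fin 3))
    (M : Fin 3 → Fin 3 → ℝ)
    (hM : ∀ i j, M i j = 4 * π * ∫ s in (0 : ℝ)..Lc, deriv φ s i * (φ s - y) j)
    (w : EuclideanSpace ℝ (Fin 3)) (hwy : w ≠ y) :
    ∫ s in (0 : ℝ)..Lc,
        cross3 (deriv φ s)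
          (fderiv ℝ (fun v : EuclideanSpace ℝ (Fin 3) => (‖w - v‖ ^ 3)⁻¹ • (w - v)) y
            (φ s - y))
      = curl3 (fun w' =>
          (WithLp.equiv 2 (Fin 3 → ℝ)).symm
            (fun i => ∑ j, M j i * gradient fundSol (w' - y) j)) w := by
  have hφ₁ : ContDiff ℝ 1 φ := hφ.of_le (by norm_num)
  have hskew : ∀ a b, ∫ s in (0 : ℝ)..Lc, deriv φ s b * (φ s - y) a
      = -∫ s in (0 : ℝ)..Lc, deriv φ s a * (φ s - y) b := fun a b =>
    intervalIntegral_deriv_mul_antisymm hφ₁ hclosed (EuclideanSpace.proj a)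
      (EuclideanSpace.proj b) y
  have hJ := coulombJacobian_single_apply_comm (w - y)
  ext i
  rw [fderiv_coulomb_const_sub hwy,
    intervalIntegral_cross3_apply (g := fun s => φ s - y) (hφ₁.continuous_deriv le_rfl)
      (by fun_prop),
    curl3_sum_mul_apply (hasFDerivAt_gradient_fundSol_sub hwy)]
  refine Finset.sum_congr rfl fun j _ => ?_
  simp only [hM, neg_apply, smul_apply, PiLp.neg_apply, PiLp.smul_apply, smul_eq_mul]
  rw [hskew (i + 2) j, hskew (i + 1) j, hJ j (i + 1), hJ j (i + 2)]
  field_simp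
  ring

/-- Small-coil (dipole) expansion: for a `C²` closed coil `φ` with vanishing effective
orientation `∫₀^L φ'(s) ds = 0`, center of mass `y`, and dipole matrix
`M = 4π ∫₀^L φ'(s) ⊗ (φ(s) − y) ds`, the first-order term of the Biot–Savart field is
`∫₀^L φ'(s) × ∇F(w)(φ(s) − y) ds = ∇ × (Mᵀ ∇γ(w−y))`, with `F(w,v) = (w−v)/|w−v|³`. -/
theorem stmt17 (Lc : ℝ) (hL : 0 < Lc) (φ : ℝ → EuclideanSpace ℝ (Fin 3))
    (hφ : ContDiff ℝ 2 φ)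
    (hclosed : ∫ s in (0 : ℝ)..Lc, deriv φ s = 0)
    (y : EuclideanSpace ℝ (Fin 3)) (hy : y = Lc⁻¹ • ∫ s in (0 : ℝ)..Lc, φ s)
    (M : Fin 3 → Fin 3 → ℝ)
    (hM : ∀ i j, M i j = 4 * π * ∫ s in (0 : ℝ)..Lc, deriv φ s i * (φ s - y) j)
    (w : EuclideanSpace ℝ (Fin 3)) (hw : w ∉ φ '' Set.Icc 0 Lc) (hwy : w ≠ y) :
    ∫ s in (0 : ℝ)..Lc,
        cross3 (deriv φ s)
          (fderiv ℝ (fun v : EuclideanSpace ℝ (Fin 3) => (‖w - v‖ ^ 3)⁻¹ • (w - v)) y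
            (φ s - y))
      = curl3 (fun w' =>
          (WithLp.equiv 2 (Fin 3 → ℝ)).symm
            (fun i => ∑ j, M j i * gradient fundSol (w' - y) j)) w :=
  stmt17_general Lc φ hφ hclosed y M hM w hwy
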